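/- Substitution of equivalents holds in AA: if ψ ↔ η is valid, then φ[p/ψ] ↔ φ[p/η] is valid, for any formula φ and atom p. -/

import Mathlib

/-- Formulas of asynchronous announcement logic over agents `A` and atoms `P`.
`⊥` is included as a primitive for convenience (it is an abbreviation in the paper). -/
inductive Form (A P : Type) : Type where
  | bot  : Form A P
  | atom : P → Form A P
  | neg  : Form A P → Form A P
  | and  : Form A P → Form A P → Form A P
  | know : A → Form A P → Form A P
  | ann  : Form A P → Form A P → Form A P
  | next : A → Form A P → Form A P

namespace Form

def size {A P : Type} : Form A P → ℕ
  | bot => 1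
  | atom _ => 1
  | neg φ => φ.size + 1
  | and φ ψ => φ.size + ψ.size + 1
  | know _ φ => φ.size + 1
  | ann φ ψ => φ.size + ψ.size + 1
  | next _ φ => φ.size + 1

theorem size_pos {A P : Type} (φ : Form A P) : 1 ≤ φ.size := by
  cases φ <;> simp [size]

end Form

/-- An epistemic frame with valuation: equivalence relations `∼ₐ` and a valuation. -/
structure Frame (A P S : Type) where
  rel : A → S → S → Prop
  equiv : ∀ a, Equivalence (rel a)
  val : P → Set S

/-- `g ≤ₐ f` between cuts. -/
def cutLE {A : Type} (a : A) (g f : A → ℕ) : Prop :=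
  g a = f a ∧ ∀ b, b ≠ a → g b ≤ f a

/-- `f⁺ᵃ`: increment the cut `f` at agent `a`. -/
def inc {A : Type} [DecidableEq A] (a : A) (f : A → ℕ) : A → ℕ :=
  fun b => if b = a then f a + 1 else f b

def histSize {A P : Type} (σ : List (Form A P)) : ℕ := (σ.map Form.size).sum

mutual
/-- Truth in an asynchronous (pre-)model.  The announcement history `σ` is stored
with the most recent announcement first; `f` is the cut, `s` the state. -/
def Sat {A P S : Type} [DecidableEq A] (F : Frame A P S) : List (Form A P) → (A → ℕ) → S → Form A P → Prop
  | _, _, _, .bot => False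
  | _, _, s, .atom p => s ∈ F.val p
  | σ, f, s, .neg φ => ¬ Sat F σ f s φ
  | σ, f, s, .and φ ψ => Sat F σ f s φ ∧ Sat F σ f s ψ
  | σ, f, s, .know a φ =>
      ∀ t g, F.rel a s t → cutLE a g f → Good F σ g t → Sat F σ g t φ
  | σ, f, s, .ann ψ χ => Sat F σ f s ψ → Sat F (ψ :: σ) f s χ
  | σ, f, s, .next a φ => f a < σ.length → Sat F σ (inc a f) s φ
termination_by σ _ _ φ => histSize σ + φ.size
decreasing_by
  all_goals simp_all [histSize, Form.size]
  all_goals first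
    | omega
    | (have := Form.size_pos φ; omega)

/-- `(S,∼,V,s,σ,f)` is an asynchronous model (the history together with the cut
can be generated by truthful announcements and receptions). -/
def Good {A P S : Type} [DecidableEq A] (F : Frame A P S) : List (Form A P) → (A → ℕ) → S → Prop
  | [], f, _ => ∀ a, f a = 0
  | ψ :: σ, f, s =>
      (∀ a, f a ≤ σ.length + 1) ∧
      ∃ f', (∀ a, f' a ≤ f a) ∧ Good F σ f' s ∧ Sat F σ f' s ψ
termination_by σ _ _ => histSize σ + 1
decreasing_by
  all_goals simp_all [histSize, Form.size]
  all_goals (have := Form.size_pos ψ; omega)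
end


/-- Uniform substitution `φ[p/ρ]` of `ρ` for the atom `p` in `φ`
(in an announcement, both the announced formula and the continuation are substituted). -/
def Form.subst {A P : Type} [DecidableEq P] (p : P) (ρ : Form A P) : Form A P → Form A P
  | .bot => .bot
  | .atom q => if q = p then ρ else .atom q
  | .neg φ => .neg (Form.subst p ρ φ)
  | .and φ ψ => .and (Form.subst p ρ φ) (Form.subst p ρ ψ)
  | .know a φ => .know a (Form.subst p ρ φ)
  | .ann φ ψ => .ann (Form.subst p ρ φ) (Form.subst p ρ ψ)
  | .next a φ => .next a (Form.subst p ρ φ)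

/-!
Substituting in an announcement `[χ₁]χ₂` changes the history against which `χ₂` is evaluated,
so the induction has to compare truth against two different histories. We work with histories
whose entries are either plain formulas, shared by both sides, or templates `χ`, read as
`χ[p/ψ]` on one side and `χ[p/η]` on the other, and prove simultaneously that the two readings
of such a history are equally good, agree on plain formulas, and agree on `χ[p/ψ]` versus
`χ[p/η]` for every template `χ`. At the atom `p` the validity of `ψ ↔ η` is used at the first
history, after which `η` is compared across the two readings as a plain formula; this is why
the induction measure ranks templates lexicographically above plain formulas.
-/

theorem imp_congr_ctx_left {a b c d : Prop} (h₁ : a ↔ c) (h₂ : a → (b ↔ d)) :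
    (a → b) ↔ (c → d) :=
  imp_congr_ctx h₁ fun hc => h₂ (h₁.mpr hc)

namespace Good

variable {A P S : Type} [DecidableEq A] {F : Frame A P S} {σ : List (Form A P)} {f : A → ℕ}
  {s : S}

theorem cut_le_length (hg : Good F σ f s) (a : A) : f a ≤ σ.length := by
  cases σ with
  | nil =>
    simp only [Good] at hg
    simp [hg a]
  | cons χ σ =>
    simp only [Good] at hg
    simpa using hg.1 a

theorem cons {χ : Form A P} (hg : Good F σ f s) (hχ : Sat F σ f s χ) : Good F (χ :: σ) f s := by
  simp only [Good]
  exact ⟨fun a => (hg.cut_le_length a).trans (Nat.le_succ _), f, fun _ => le_rfl, hg, hχ⟩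

theorem inc {a : A} (hg : Good F σ f s) (hlt : f a < σ.length) : Good F σ (inc a f) s := by
  cases σ with
  | nil => simp at hlt
  | cons χ σ =>
    simp only [Good] at hg ⊢
    obtain ⟨hle, f', hf', hgood, hsat⟩ := hg
    refine ⟨fun b => ?_, f', fun b => (hf' b).trans ?_, hgood, hsat⟩
    · by_cases hb : b = a
      · simp only [_root_.inc, hb, if_true]
        simpa using hlt
      · simpa [_root_.inc, hb] using hle b
    · by_cases hb : b = a <;> simp [_root_.inc, hb]

end Good

namespace Form

variable {A P S : Type} [DecidableEq P]

def fillTemplates (p : P) (ρ : Form A P) : List (Form A P ⊕ Form A P) → List (Form A P)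
  | [] => []
  | .inl α :: τ => α :: fillTemplates p ρ τ
  | .inr χ :: τ => subst p ρ χ :: fillTemplates p ρ τ

def templateSize : List (Form A P ⊕ Form A P) → ℕ
  | [] => 0
  | .inl _ :: τ => templateSize τ
  | .inr χ :: τ => χ.size + templateSize τ

def plainSize : List (Form A P ⊕ Form A P) → ℕ
  | [] => 0
  | .inl α :: τ => α.size + plainSize τ
  | .inr _ :: τ => plainSize τ

@[simp]
theorem length_fillTemplates (p : P) (ρ : Form A P) :
    ∀ τ : List (Form A P ⊕ Form A P), (fillTemplates p ρ τ).length = τ.length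
  | [] => rfl
  | .inl _ :: τ | .inr _ :: τ => congrArg (· + 1) (length_fillTemplates p ρ τ)

theorem fillTemplates_map_inl (p : P) (ρ : Form A P) :
    ∀ σ : List (Form A P), fillTemplates p ρ (σ.map .inl) = σ
  | [] => rfl
  | α :: σ => congrArg (α :: ·) (fillTemplates_map_inl p ρ σ)

variable [DecidableEq A] {F : Frame A P S} {ψ η : Form A P}

mutual

theorem good_fillTemplates_iff (p : P)
    (h : ∀ σ f s, Good F σ f s → (Sat F σ f s ψ ↔ Sat F σ f s η)) :
    ∀ (τ : List (Form A P ⊕ Form A P)) (f : A → ℕ) (s : S),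
      Good F (fillTemplates p ψ τ) f s ↔ Good F (fillTemplates p η τ) f s
  | [], _, _ => Iff.rfl
  | .inl α :: τ, f, s => by
    simp only [fillTemplates, Good, length_fillTemplates]
    exact and_congr_right' <| exists_congr fun f' => and_congr_right' <|
      and_congr (good_fillTemplates_iff p h τ f' s) (sat_fillTemplates_iff p h τ f' s α)
  | .inr χ :: τ, f, s => by
    simp only [fillTemplates, Good, length_fillTemplates]
    exact and_congr_right' <| exists_congr fun f' => and_congr_right' <|
      (and_congr_right fun hg => sat_fillTemplates_subst_iff p h τ f' s χ hg).trans
        (and_congr_left' (good_fillTemplates_iff p h τ f' s))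
termination_by τ => (templateSize τ, plainSize τ + 1)
decreasing_by
  all_goals
    simp only [Prod.lex_def, templateSize, plainSize]
    grind [size_pos]

theorem sat_fillTemplates_iff (p : P)
    (h : ∀ σ f s, Good F σ f s → (Sat F σ f s ψ ↔ Sat F σ f s η)) :
    ∀ (τ : List (Form A P ⊕ Form A P)) (f : A → ℕ) (s : S) (α : Form A P),
      Sat F (fillTemplates p ψ τ) f s α ↔ Sat F (fillTemplates p η τ) f s α
  | _, _, _, .bot | _, _, _, .atom _ => by simp only [Sat]
  | τ, f, s, .neg α => by
    simp only [Sat]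
    exact not_congr (sat_fillTemplates_iff p h τ f s α)
  | τ, f, s, .and α β => by
    simp only [Sat]
    exact and_congr (sat_fillTemplates_iff p h τ f s α) (sat_fillTemplates_iff p h τ f s β)
  | τ, _, s, .know a α => by
    simp only [Sat]
    exact forall₂_congr fun t g => imp_congr_right fun _ => imp_congr_right fun _ =>
      imp_congr (good_fillTemplates_iff p h τ g t) (sat_fillTemplates_iff p h τ g t α)
  | τ, f, s, .ann α β => by
    simp only [Sat]
    exact imp_congr (sat_fillTemplates_iff p h τ f s α)
      (sat_fillTemplates_iff p h (.inl α :: τ) f s β)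
  | τ, f, s, .next a α => by
    simp only [Sat, length_fillTemplates]
    exact imp_congr_right fun _ => sat_fillTemplates_iff p h τ (inc a f) s α
termination_by τ _ _ α => (templateSize τ, plainSize τ + α.size)
decreasing_by
  all_goals
    simp only [Prod.lex_def, templateSize, plainSize, size]
    grind [size_pos]

theorem sat_fillTemplates_subst_iff (p : P)
    (h : ∀ σ f s, Good F σ f s → (Sat F σ f s ψ ↔ Sat F σ f s η)) :
    ∀ (τ : List (Form A P ⊕ Form A P)) (f : A → ℕ) (s : S) (χ : Form A P),
      Good F (fillTemplates p ψ τ) f s →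
      (Sat F (fillTemplates p ψ τ) f s (subst p ψ χ) ↔
        Sat F (fillTemplates p η τ) f s (subst p η χ))
  | _, _, _, .bot, _ => by simp only [subst, Sat]
  | τ, f, s, .atom q, hg => by
    by_cases hq : q = p
    · simp only [subst, hq, if_true]
      exact (h _ f s hg).trans (sat_fillTemplates_iff p h τ f s η)
    · simp only [subst, hq, if_false, Sat]
  | τ, f, s, .neg χ, hg => by
    simp only [subst, Sat]
    exact not_congr (sat_fillTemplates_subst_iff p h τ f s χ hg)
  | τ, f, s, .and χ₁ χ₂, hg => by
    simp only [subst, Sat]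
    exact and_congr (sat_fillTemplates_subst_iff p h τ f s χ₁ hg)
      (sat_fillTemplates_subst_iff p h τ f s χ₂ hg)
  | τ, _, s, .know a χ, _ => by
    simp only [subst, Sat]
    exact forall₂_congr fun t g => imp_congr_right fun _ => imp_congr_right fun _ =>
      imp_congr_ctx_left (good_fillTemplates_iff p h τ g t)
        (sat_fillTemplates_subst_iff p h τ g t χ)
  | τ, f, s, .ann χ₁ χ₂, hg => by
    simp only [subst, Sat]
    exact imp_congr_ctx_left (sat_fillTemplates_subst_iff p h τ f s χ₁ hg) fun hχ₁ =>
      sat_fillTemplates_subst_iff p h (.inr χ₁ :: τ) f s χ₂ (hg.cons hχ₁)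
  | τ, f, s, .next a χ, hg => by
    simp only [subst, Sat, length_fillTemplates]
    exact imp_congr_right fun hlt =>
      sat_fillTemplates_subst_iff p h τ (inc a f) s χ (hg.inc (by simpa using hlt))
termination_by τ _ _ χ => (templateSize τ + χ.size, plainSize τ)
decreasing_by
  all_goals
    simp only [Prod.lex_def, templateSize, plainSize, size]
    grind [size_pos]

end

end Form

/-- Substitution of equivalents holds in AA: if `ψ ↔ η` is valid (true in every
asynchronous model), then `φ[p/ψ] ↔ φ[p/η]` is valid. -/
theorem subst_equiv {A P : Type} [DecidableEq A] [DecidableEq P] [Fintype A] [Countable P]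
    (p : P) (φ ψ η : Form A P)
    (h : ∀ (S : Type) (F : Frame A P S) (σ : List (Form A P)) (f : A → ℕ) (s : S),
      Good F σ f s → (Sat F σ f s ψ ↔ Sat F σ f s η)) :
    ∀ (S : Type) (F : Frame A P S) (σ : List (Form A P)) (f : A → ℕ) (s : S),
      Good F σ f s →
      (Sat F σ f s (Form.subst p ψ φ) ↔ Sat F σ f s (Form.subst p η φ)) := by
  intro S F σ f s hg
  have key := Form.sat_fillTemplates_subst_iff p (h S F) (σ.map .inl) f s φ
  simp only [Form.fillTemplates_map_inl] at key
  exact key hg
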